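/- For every real n > 1, the negative fixed point x* of f_n (i.e., the unique x < 0 with (1-x)^(-n) - 1 = x) satisfies -1 < x* < 0, and f_n(x) < x for x ∈ (x*, 0) while f_n(x) > x for x < x*. -/

import Mathlib

noncomputable def polu (n : ℝ) (x : ℝ) : ℝ :=
  if 0 ≤ x then x else (1 - x) ^ (-n) - 1

/-!
In the variable `t = 1 - x`, the difference `polu n x - x` equals `t ^ (-n) + t - 2` for `x < 0`,
a strictly convex function of `t > 0`. It vanishes at `t = 1` and at `t = 1 - x*`, so it is
negative strictly between these two roots and positive beyond them. Finally `1 + x*` equals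
`(1 - x*) ^ (-n) > 0`.
-/

open Set

theorem strictConvexOn_rpow_of_neg {r : ℝ} (hr : r < 0) :
    StrictConvexOn ℝ (Ioi 0) fun x : ℝ ↦ x ^ r := by
  refine strictConvexOn_of_deriv2_pos' (convex_Ioi 0)
    (continuousOn_id.rpow_const fun x hx ↦ Or.inl (ne_of_gt hx)) fun x hx ↦ ?_
  have hcoeff : 0 < (descPochhammer ℝ 2).eval r := by
    simp only [descPochhammer_succ_right, descPochhammer_zero, Polynomial.eval_mul,
      Polynomial.eval_one, Polynomial.eval_X, Polynomial.eval_sub, Polynomial.eval_natCast]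
    nlinarith
  rw [Real.iter_deriv_rpow_const]
  exact mul_pos hcoeff (Real.rpow_pos_of_pos hx _)

namespace StrictConvexOn

variable {𝕜 β : Type*} [Field 𝕜] [LinearOrder 𝕜] [IsStrictOrderedRing 𝕜]
  [AddCommMonoid β] [LinearOrder β] [IsOrderedAddMonoid β] [Module 𝕜 β] [PosSMulStrictMono 𝕜 β]
  {s : Set 𝕜} {f : 𝕜 → β} {a b x : 𝕜}

theorem apply_lt_of_mem_Ioo_of_apply_eq (hf : StrictConvexOn 𝕜 s f) (ha : a ∈ s) (hb : b ∈ s)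
    (hfab : f a = f b) (hx : x ∈ Ioo a b) : f x < f a := by
  have hab := hx.1.trans hx.2
  simpa only [hfab, max_self] using hf.lt_on_openSegment ha hb hab.ne (by rwa [openSegment_eq_Ioo hab])

theorem apply_lt_of_lt_of_apply_eq (hf : StrictConvexOn 𝕜 s f) (ha : a ∈ s) (hx : x ∈ s)
    (hab : a < b) (hbx : b < x) (hfab : f a = f b) : f b < f x := by
  have hax := hab.trans hbx
  have := hf.lt_on_openSegment ha hx hax.ne (by rw [openSegment_eq_Ioo hax]; exact ⟨hab, hbx⟩)
  rw [hfab, lt_max_iff] at this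
  exact this.resolve_left (lt_irrefl _)

end StrictConvexOn

theorem polu_of_neg {n x : ℝ} (hx : x < 0) : polu n x = (1 - x) ^ (-n) - 1 :=
  if_neg hx.not_ge

theorem polu_fixed_point_props (n : ℝ) (hn : 1 < n) (xs : ℝ)
    (hxs : xs < 0) (hfix : (1 - xs) ^ (-n) - 1 = xs) :
    -1 < xs ∧
    (∀ x : ℝ, xs < x → x < 0 → polu n x < x) ∧
    (∀ x : ℝ, x < xs → polu n x > x) := by
  set ψ : ℝ → ℝ := fun t ↦ t ^ (-n) + t
  have hψ : StrictConvexOn ℝ (Ioi 0) ψ :=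
    (strictConvexOn_rpow_of_neg (by linarith)).add_convexOn (convexOn_id (convex_Ioi 0))
  have hψ_eq : ψ 1 = ψ (1 - xs) := by simp only [ψ, Real.one_rpow]; linarith
  have hone : (1 : ℝ) ∈ Ioi 0 := mem_Ioi.2 one_pos
  have hts : 1 - xs ∈ Ioi 0 := mem_Ioi.2 (by linarith)
  refine ⟨?_, fun x hxsx hx ↦ ?_, fun x hx ↦ ?_⟩
  · linarith [Real.rpow_pos_of_pos hts (-n)]
  · have hlt := hψ.apply_lt_of_mem_Ioo_of_apply_eq hone hts hψ_eq
      (x := 1 - x) ⟨by linarith, by linarith⟩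
    simp only [ψ, Real.one_rpow] at hlt
    rw [polu_of_neg hx]
    linarith
  · have hgt := hψ.apply_lt_of_lt_of_apply_eq hone (mem_Ioi.2 (by linarith))
      (by linarith) (by linarith : 1 - xs < 1 - x) hψ_eq
    simp only [ψ] at hgt
    rw [polu_of_neg (hx.trans hxs)]
    linarith
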